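/- arXiv:1709.10029 — 3 statements merged into one kernel-verified Lean document; each statement's English description precedes it below -/
import Mathlib

section
/- Let X ∈ R^{n×p}, Y ∈ R^n, γ > 0, and 1 ≤ k ≤ p. The minimum of (1/(2γ))‖w‖₂² + (1/2)‖Y − Xw‖₂² over w ∈ R^p with at most k nonzero entries equals the minimum over binary vectors s ∈ {0,1}^p with ∑_j s_j ≤ k of (1/2) Yᵀ (I_n + γ ∑_{j=1}^p s_j X_j X_jᵀ)⁻¹ Y, where X_j denotes the j-th column of X. -/
open Matrix

/-! For a symmetric idempotent `D` and `v = (I + γ X D Xᵀ)⁻¹ Y`, put `w* = γ D Xᵀ v`; then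
`Y = v + X w*`, and completing the square gives, for every `w` with `D w = w`,
`(1/(2γ))‖w‖² + ½‖Y - X w‖² = ½ Yᵀ v + (1/(2γ))‖w - w*‖² + ½‖X (w - w*)‖²`.
Taking `D = diag s` for a binary `s`, the minimum of the ridge objective over vectors supported in
`s` is therefore `½ Yᵀ (I + γ ∑ s_j X_j X_jᵀ)⁻¹ Y`, attained at `w*`. Minimising over the finitely
many `s` with `∑ s_j ≤ k` gives both sides of the claim. -/

section Ridge

variable {m ι : Type*} [Fintype m] [Fintype ι]

noncomputable def ridgeObjective (γ : ℝ) (X : Matrix m ι ℝ) (Y : m → ℝ) (w : ι → ℝ) : ℝ :=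
  1 / (2 * γ) * (w ⬝ᵥ w) + 1 / 2 * ((Y - X *ᵥ w) ⬝ᵥ (Y - X *ᵥ w))

variable [DecidableEq m]

noncomputable def ridgeValue (γ : ℝ) (X : Matrix m ι ℝ) (D : Matrix ι ι ℝ) (Y : m → ℝ) : ℝ :=
  1 / 2 * (Y ⬝ᵥ ((1 + γ • (X * D * Xᵀ))⁻¹ *ᵥ Y))

noncomputable def ridgeMinimizer (γ : ℝ) (X : Matrix m ι ℝ) (D : Matrix ι ι ℝ) (Y : m → ℝ) :
    ι → ℝ :=
  γ • D *ᵥ (Xᵀ *ᵥ ((1 + γ • (X * D * Xᵀ))⁻¹ *ᵥ Y))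

theorem posDef_one_add_smul_mul_mul_transpose (X : Matrix m ι ℝ) {D : Matrix ι ι ℝ}
    (hDs : D.IsSymm) (hDi : IsIdempotentElem D) {γ : ℝ} (hγ : 0 ≤ γ) :
    (1 + γ • (X * D * Xᵀ)).PosDef := by
  have h : X * D * Xᵀ = X * D * (X * D)ᴴ := by
    rw [conjTranspose_eq_transpose_of_trivial, transpose_mul, hDs.eq, ← Matrix.mul_assoc,
      Matrix.mul_assoc X D D, hDi.eq]
  exact PosDef.one.add_posSemidef ((h ▸ posSemidef_self_mul_conjTranspose _).smul hγ)

theorem mulVec_ridgeMinimizer (γ : ℝ) (X : Matrix m ι ℝ) {D : Matrix ι ι ℝ}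
    (hDi : IsIdempotentElem D) (Y : m → ℝ) :
    D *ᵥ ridgeMinimizer γ X D Y = ridgeMinimizer γ X D Y := by
  rw [ridgeMinimizer, mulVec_smul, mulVec_mulVec, hDi.eq]

theorem ridgeObjective_eq_ridgeValue_add {γ : ℝ} (hγ : 0 < γ) (X : Matrix m ι ℝ)
    {D : Matrix ι ι ℝ} (hDs : D.IsSymm) (hDi : IsIdempotentElem D) (Y : m → ℝ) {w : ι → ℝ}
    (hw : D *ᵥ w = w) :
    ridgeObjective γ X Y w = ridgeValue γ X D Y
      + 1 / (2 * γ) * ((w - ridgeMinimizer γ X D Y) ⬝ᵥ (w - ridgeMinimizer γ X D Y))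
      + 1 / 2 * (X *ᵥ (w - ridgeMinimizer γ X D Y) ⬝ᵥ X *ᵥ (w - ridgeMinimizer γ X D Y)) := by
  set A := 1 + γ • (X * D * Xᵀ)
  set v := A⁻¹ *ᵥ Y
  set u := ridgeMinimizer γ X D Y
  have hu : u = γ • D *ᵥ (Xᵀ *ᵥ v) := rfl
  set d := w - u
  have hY : Y = v + X *ᵥ u := by
    have hA : IsUnit A.det :=
      (posDef_one_add_smul_mul_mul_transpose X hDs hDi hγ.le).isUnit.map detMonoidHom
    calc Y = A *ᵥ v := by rw [mulVec_mulVec, mul_nonsing_inv _ hA, one_mulVec]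
      _ = v + X *ᵥ u := by
        simp only [A, hu, add_mulVec, one_mulVec, smul_mulVec, mulVec_smul, mulVec_mulVec,
          Matrix.mul_assoc]
  have hdot : ∀ z, D *ᵥ z = z → u ⬝ᵥ z = γ * (X *ᵥ z ⬝ᵥ v) := by
    intro z hz
    rw [hu, smul_dotProduct, dotProduct_comm, dotProduct_mulVec, ← mulVec_transpose, hDs.eq, hz,
      dotProduct_mulVec, vecMul_transpose, smul_eq_mul]
  have hDd : D *ᵥ d = d := by
    rw [mulVec_sub, hw, mulVec_ridgeMinimizer γ X hDi]
  have hw' : w = u + d := (add_sub_cancel u w).symm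
  have hres : Y - X *ᵥ w = v - X *ᵥ d := by rw [hY, hw', mulVec_add]; abel
  rw [ridgeObjective, hres, hw']
  change _ = 1 / 2 * (Y ⬝ᵥ v) + _ + _
  rw [hY]
  simp only [add_dotProduct, dotProduct_add, sub_dotProduct, dotProduct_sub]
  rw [hdot d hDd, hdot u (mulVec_ridgeMinimizer γ X hDi Y), dotProduct_comm d u, hdot d hDd,
    dotProduct_comm v (X *ᵥ d)]
  field_simp
  ring

theorem ridgeValue_le_ridgeObjective {γ : ℝ} (hγ : 0 < γ) (X : Matrix m ι ℝ)
    {D : Matrix ι ι ℝ} (hDs : D.IsSymm) (hDi : IsIdempotentElem D) (Y : m → ℝ) {w : ι → ℝ}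
    (hw : D *ᵥ w = w) : ridgeValue γ X D Y ≤ ridgeObjective γ X Y w := by
  rw [ridgeObjective_eq_ridgeValue_add hγ X hDs hDi Y hw, add_assoc]
  refine le_add_of_nonneg_right (add_nonneg (mul_nonneg (by positivity) ?_)
    (mul_nonneg (by norm_num) ?_)) <;>
    exact Finset.sum_nonneg fun i _ => mul_self_nonneg _

theorem ridgeObjective_ridgeMinimizer {γ : ℝ} (hγ : 0 < γ) (X : Matrix m ι ℝ)
    {D : Matrix ι ι ℝ} (hDs : D.IsSymm) (hDi : IsIdempotentElem D) (Y : m → ℝ) :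
    ridgeObjective γ X Y (ridgeMinimizer γ X D Y) = ridgeValue γ X D Y := by
  simp [ridgeObjective_eq_ridgeValue_add hγ X hDs hDi Y (mulVec_ridgeMinimizer γ X hDi Y)]

end Ridge

theorem sum_smul_vecMulVec_eq_mul_diagonal_mul_transpose {m ι R : Type*} [Fintype ι]
    [DecidableEq ι] [CommSemiring R] (X : Matrix m ι R) (s : ι → R) :
    ∑ j, s j • vecMulVec (fun i => X i j) (fun i => X i j) = X * diagonal s * Xᵀ := by
  ext a b
  rw [mul_apply]
  simp only [Matrix.sum_apply, Matrix.smul_apply, vecMulVec_apply, transpose_apply, mul_diagonal,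
    smul_eq_mul]
  exact Finset.sum_congr rfl fun j _ => by ring

theorem isIdempotentElem_diagonal {ι R : Type*} [Fintype ι] [DecidableEq ι] [Semiring R]
    {s : ι → R} (hs : ∀ j, IsIdempotentElem (s j)) : IsIdempotentElem (diagonal s) := by
  rw [IsIdempotentElem, diagonal_mul_diagonal]
  exact congrArg diagonal (funext fun j => hs j)

theorem filter_ne_zero_subset_of_diagonal_mulVec {ι R : Type*} [Fintype ι] [DecidableEq ι]
    [NonUnitalNonAssocSemiring R] [DecidableEq R] {s w : ι → R} (hw : diagonal s *ᵥ w = w) :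
    Finset.univ.filter (fun j => w j ≠ 0) ⊆ Finset.univ.filter (fun j => s j ≠ 0) := by
  intro j
  simp only [Finset.mem_filter, Finset.mem_univ, true_and]
  intro h
  rw [← hw, mulVec_diagonal] at h
  exact left_ne_zero_of_mul h

theorem sum_eq_card_filter_ne_zero {ι R : Type*} [Fintype ι] [NonAssocSemiring R]
    [DecidableEq R] {s : ι → R} (hs : ∀ j, s j = 0 ∨ s j = 1) :
    ∑ j, s j = (Finset.univ.filter (fun j => s j ≠ 0)).card := by
  rw [← Finset.sum_boole]
  refine Finset.sum_congr rfl fun j _ => ?_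
  rcases hs j with h | h <;> split_ifs <;> simp_all

theorem IsLeast.of_image_of_forall_exists_le {α β γ : Type*} [PartialOrder γ] {f : α → γ}
    {g : β → γ} {A : Set α} {B : Set β} {c : γ} (hc : IsLeast (g '' B) c)
    (hfg : ∀ a ∈ A, ∃ b ∈ B, g b ≤ f a) (hgf : ∀ b ∈ B, ∃ a ∈ A, f a ≤ g b) :
    IsLeast (f '' A) c := by
  obtain ⟨⟨b, hb, rfl⟩, hlow⟩ := hc
  have hlow' : ∀ a ∈ A, g b ≤ f a := fun a ha =>
    let ⟨b', hb', hle⟩ := hfg a ha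
    (hlow (Set.mem_image_of_mem g hb')).trans hle
  obtain ⟨a, ha, hab⟩ := hgf b hb
  exact ⟨⟨a, ha, hab.antisymm (hlow' a ha)⟩, Set.forall_mem_image.2 hlow'⟩

theorem stmt4_general (n p k : ℕ)
    (X : Matrix (Fin n) (Fin p) ℝ) (Y : Fin n → ℝ) (γ : ℝ) (hγ : 0 < γ) :
    ∃ c : ℝ,
      IsLeast
        ((fun w : Fin p → ℝ =>
            (1 / (2 * γ)) * (w ⬝ᵥ w) + (1 / 2) * ((Y - X *ᵥ w) ⬝ᵥ (Y - X *ᵥ w))) ''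
          {w | (Finset.univ.filter fun j => w j ≠ 0).card ≤ k}) c ∧
      IsLeast
        ((fun s : Fin p → ℝ =>
            (1 / 2) *
              (Y ⬝ᵥ (((1 : Matrix (Fin n) (Fin n) ℝ) +
                γ • ∑ j : Fin p, s j • vecMulVec (fun i => X i j) (fun i => X i j))⁻¹ *ᵥ Y))) ''
          {s | (∀ j, s j = 0 ∨ s j = 1) ∧ ∑ j, s j ≤ (k : ℝ)}) c := by
  have hbin (s : Fin p → ℝ) (hs : ∀ j, s j = 0 ∨ s j = 1) : IsIdempotentElem (diagonal s) :=
    isIdempotentElem_diagonal fun j => IsIdempotentElem.iff_eq_zero_or_one.2 (hs j)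
  simp only [sum_smul_vecMulVec_eq_mul_diagonal_mul_transpose]
  change ∃ c, IsLeast (ridgeObjective γ X Y '' _) c ∧
    IsLeast ((fun s => ridgeValue γ X (diagonal s) Y) '' _) c
  set S : Set (Fin p → ℝ) := {s | (∀ j, s j = 0 ∨ s j = 1) ∧ ∑ j, s j ≤ (k : ℝ)}
  have hS : S.Finite :=
    (Set.Finite.pi' fun _ => Set.toFinite {0, 1}).subset fun _ hs => hs.1
  obtain ⟨s₀, hs₀, hmin⟩ := S.exists_min_image (fun s => ridgeValue γ X (diagonal s) Y) hS
    ⟨0, fun _ => Or.inl rfl, by simp⟩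
  have hc : IsLeast ((fun s => ridgeValue γ X (diagonal s) Y) '' S) _ :=
    ⟨Set.mem_image_of_mem _ hs₀, Set.forall_mem_image.2 hmin⟩
  refine ⟨_, hc.of_image_of_forall_exists_le ?_ ?_, hc⟩
  · intro w hw
    set s : Fin p → ℝ := fun j => if w j ≠ 0 then 1 else 0
    have hs : ∀ j, s j = 0 ∨ s j = 1 := fun j => by by_cases h : w j ≠ 0 <;> simp [s, h]
    have hsw : diagonal s *ᵥ w = w := funext fun j => by
      by_cases h : w j ≠ 0 <;> simp_all [s, mulVec_diagonal]
    refine ⟨s, ⟨hs, ?_⟩, ridgeValue_le_ridgeObjective hγ X (isSymm_diagonal s)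
      (hbin s hs) Y hsw⟩
    simp only [s, Finset.sum_boole]
    exact_mod_cast hw
  · rintro s ⟨hs, hsk⟩
    refine ⟨ridgeMinimizer γ X (diagonal s) Y, ?_,
      (ridgeObjective_ridgeMinimizer hγ X (isSymm_diagonal s) (hbin s hs) Y).le⟩
    rw [sum_eq_card_filter_ne_zero hs, Nat.cast_le] at hsk
    exact (Finset.card_le_card (filter_ne_zero_subset_of_diagonal_mulVec
      (mulVec_ridgeMinimizer γ X (hbin s hs) Y))).trans hsk

theorem stmt4 (n p k : ℕ) (hk1 : 1 ≤ k) (hkp : k ≤ p)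
    (X : Matrix (Fin n) (Fin p) ℝ) (Y : Fin n → ℝ) (γ : ℝ) (hγ : 0 < γ) :
    ∃ c : ℝ,
      IsLeast
        ((fun w : Fin p → ℝ =>
            (1 / (2 * γ)) * (w ⬝ᵥ w) + (1 / 2) * ((Y - X *ᵥ w) ⬝ᵥ (Y - X *ᵥ w))) ''
          {w | (Finset.univ.filter fun j => w j ≠ 0).card ≤ k}) c ∧
      IsLeast
        ((fun s : Fin p → ℝ =>
            (1 / 2) *
              (Y ⬝ᵥ (((1 : Matrix (Fin n) (Fin n) ℝ) +
                γ • ∑ j : Fin p, s j • vecMulVec (fun i => X i j) (fun i => X i j))⁻¹ *ᵥ Y))) ''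
          {s | (∀ j, s j = 0 ∨ s j = 1) ∧ ∑ j, s j ≤ (k : ℝ)}) c :=
  stmt4_general n p k X Y γ hγ
end

section
/- For x ∈ R^p and integer 1 ≤ k ≤ p, the sum of the k largest components of x equals min { k·t + ∑_{j=1}^p u_j : t ∈ R, u ∈ R^p, u_j ≥ 0, u_j ≥ x_j − t for all j }. -/
open Matrix

/-- Sum of the `k` largest components of `x`. -/
noncomputable def sumKLargest {p : ℕ} (x : Fin p → ℝ) (k : ℕ) : ℝ :=
  (((List.ofFn x).insertionSort (· ≥ ·)).take k).sum

/-!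
Weak duality: for every threshold `t`, each of the `k` largest entries `a` satisfies
`a ≤ t + (a - t)⁺`, and the remaining entries contribute `(a - t)⁺ ≥ 0`; the cheapest
feasible `u` for a given `t` is `u j = (x j - t)⁺`. Strong duality: taking `t` to be the
`k`-th largest entry makes both inequalities equalities.
-/

namespace List

variable {α : Type*}

section

variable [CommRing α] [LinearOrder α] [IsStrictOrderedRing α]

lemma sum_le_length_mul_add_sum_posPart_sub (l : List α) (t : α) :
    l.sum ≤ l.length * t + (l.map fun a => (a - t)⁺).sum := by
  induction l with
  | nil => simp
  | cons a l ih =>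
    simp only [sum_cons, length_cons, map_cons, Nat.cast_succ]
    linarith [le_posPart (a - t)]

lemma sum_eq_length_mul_add_sum_posPart_sub {l : List α} {t : α} (h : ∀ a ∈ l, t ≤ a) :
    l.sum = l.length * t + (l.map fun a => (a - t)⁺).sum := by
  induction l with
  | nil => simp
  | cons a l ih =>
    simp only [sum_cons, length_cons, map_cons, Nat.cast_succ, forall_mem_cons] at h ⊢
    rw [ih h.2, posPart_eq_self.mpr (sub_nonneg.mpr h.1)]
    ring

lemma sum_posPart_sub_eq_zero {l : List α} {t : α} (h : ∀ a ∈ l, a ≤ t) :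
    (l.map fun a => (a - t)⁺).sum = 0 :=
  sum_eq_zero fun b hb => by
    obtain ⟨a, ha, rfl⟩ := mem_map.mp hb
    exact posPart_eq_zero.mpr (sub_nonpos.mpr (h a ha))

lemma sum_take_le_mul_add_sum_posPart_sub {l : List α} {k : ℕ} (hk : k ≤ l.length) (t : α) :
    (l.take k).sum ≤ k * t + (l.map fun a => (a - t)⁺).sum := by
  have hlen : ((l.take k).length : α) = k := by simp [hk]
  calc (l.take k).sum
      ≤ (l.take k).length * t + ((l.take k).map fun a => (a - t)⁺).sum :=
        sum_le_length_mul_add_sum_posPart_sub _ t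
    _ ≤ k * t + (l.map fun a => (a - t)⁺).sum := by
        rw [hlen]
        gcongr
        refine ((take_sublist k l).map _).sum_le_sum fun b hb => ?_
        obtain ⟨a, -, rfl⟩ := mem_map.mp hb
        exact posPart_nonneg _

lemma sum_take_eq_mul_add_sum_posPart_sub {l : List α} {k : ℕ} {t : α} (hk : k ≤ l.length)
    (h_take : ∀ a ∈ l.take k, t ≤ a) (h_drop : ∀ a ∈ l.drop k, a ≤ t) :
    (l.take k).sum = k * t + (l.map fun a => (a - t)⁺).sum := by
  have hlen : ((l.take k).length : α) = k := by simp [hk]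
  conv_rhs => rw [← take_append_drop k l]
  rw [map_append, sum_append, sum_posPart_sub_eq_zero h_drop, add_zero, ← hlen]
  exact sum_eq_length_mul_add_sum_posPart_sub h_take

end

lemma SortedGE.getElem_le_of_mem_take [Preorder α] {l : List α} (hl : l.SortedGE) {k : ℕ}
    (hk0 : 0 < k) (hk : k ≤ l.length) {a : α} (ha : a ∈ l.take k) : l[k - 1] ≤ a := by
  obtain ⟨i, hi, rfl⟩ := mem_iff_getElem.mp ha
  rw [getElem_take]
  exact hl.getElem_ge_getElem_of_le (by simp at hi; omega)

lemma SortedGE.le_getElem_of_mem_drop [Preorder α] {l : List α} (hl : l.SortedGE) {k : ℕ}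
    (hk0 : 0 < k) (hk : k ≤ l.length) {a : α} (ha : a ∈ l.drop k) : a ≤ l[k - 1] :=
  hl.pairwise.rel_of_mem_take_of_mem_drop
    (mem_iff_getElem.mpr ⟨k - 1, by simp; omega, by simp⟩) ha

end List

lemma sum_posPart_sub_eq_sum_insertionSort {p : ℕ} (x : Fin p → ℝ) (t : ℝ) :
    ∑ j, (x j - t)⁺ =
      (((List.ofFn x).insertionSort (· ≥ ·)).map fun a => (a - t)⁺).sum := by
  rw [((List.perm_insertionSort _ _).map _).sum_eq, List.map_ofFn, List.sum_ofFn]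
  rfl

lemma sumKLargest_le {p k : ℕ} (hkp : k ≤ p) (x : Fin p → ℝ) (t : ℝ) :
    sumKLargest x k ≤ k * t + ∑ j, (x j - t)⁺ := by
  rw [sum_posPart_sub_eq_sum_insertionSort]
  exact List.sum_take_le_mul_add_sum_posPart_sub (by simpa using hkp) t

lemma exists_sumKLargest_eq {p k : ℕ} (hk1 : 1 ≤ k) (hkp : k ≤ p) (x : Fin p → ℝ) :
    ∃ t : ℝ, sumKLargest x k = k * t + ∑ j, (x j - t)⁺ := by
  set l := (List.ofFn x).insertionSort (· ≥ ·)
  have hl : l.SortedGE := List.sortedGE_insertionSort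
  have hk : k ≤ l.length := by simpa [l] using hkp
  refine ⟨l[k - 1], ?_⟩
  rw [sum_posPart_sub_eq_sum_insertionSort]
  exact List.sum_take_eq_mul_add_sum_posPart_sub hk (fun _ => hl.getElem_le_of_mem_take hk1 hk)
    (fun _ => hl.le_getElem_of_mem_drop hk1 hk)

theorem stmt10 (p k : ℕ) (hk1 : 1 ≤ k) (hkp : k ≤ p) (x : Fin p → ℝ) :
    IsLeast
      ((fun tu : ℝ × (Fin p → ℝ) => (k : ℝ) * tu.1 + ∑ j, tu.2 j) ''
        {tu | ∀ j, 0 ≤ tu.2 j ∧ x j - tu.1 ≤ tu.2 j})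
      (sumKLargest x k) := by
  constructor
  · obtain ⟨t, ht⟩ := exists_sumKLargest_eq hk1 hkp x
    exact ⟨(t, fun j => (x j - t)⁺), fun j => ⟨posPart_nonneg _, le_posPart _⟩, ht.symm⟩
  · rintro _ ⟨⟨t, u⟩, hu, rfl⟩
    calc sumKLargest x k ≤ k * t + ∑ j, (x j - t)⁺ := sumKLargest_le hkp x t
      _ ≤ k * t + ∑ j, u j := by
        gcongr with j
        exact sup_le (hu j).2 (hu j).1
end

section
/- Let K₁,…,K_p be positive semidefinite n×n matrices, Y ∈ R^n, γ > 0, and c(s) = (1/2) Yᵀ(I_n + γ∑_j s_j K_j)⁻¹Y. For any s, s̄ with entries in [0,1], the first-order underestimator inequality c(s) ≥ c(s̄) + ∇c(s̄)ᵀ(s − s̄) holds, where ∇c(s̄)_j = −(γ/2)·ᾱᵀK_jᾱ with ᾱ = (I_n + γ∑_j s̄_j K_j)⁻¹Y. -/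
open Matrix

namespace Matrix

variable {n ι : Type*} [DecidableEq n] [Fintype ι]

theorem mulVec_nonsing_inv_mulVec [Fintype n] {R : Type*} [CommRing R] {A : Matrix n n R}
    (hA : IsUnit A) (v : n → R) :
    A *ᵥ (A⁻¹ *ᵥ v) = v := by
  rw [mulVec_mulVec, mul_nonsing_inv _ ((isUnit_iff_isUnit_det A).mp hA), one_mulVec]

/-- Gradient inequality for the convex map `A ↦ Yᵀ A⁻¹ Y` on positive definite matrices:
its derivative at `B` in direction `H` is `-bᵀ H b` with `b = B⁻¹ Y`. -/
theorem PosDef.dotProduct_inv_mulVec_add_le [Fintype n] {A B : Matrix n n ℝ} (hA : A.PosDef)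
    (hB : IsUnit B) (Y : n → ℝ) :
    Y ⬝ᵥ (B⁻¹ *ᵥ Y) + (B⁻¹ *ᵥ Y) ⬝ᵥ ((B - A) *ᵥ (B⁻¹ *ᵥ Y)) ≤ Y ⬝ᵥ (A⁻¹ *ᵥ Y) := by
  set a := A⁻¹ *ᵥ Y
  set b := B⁻¹ *ᵥ Y
  have hAa : A *ᵥ a = Y := mulVec_nonsing_inv_mulVec hA.isUnit Y
  have hBb : B *ᵥ b = Y := mulVec_nonsing_inv_mulVec hB Y
  have hsymm : a ⬝ᵥ (A *ᵥ b) = b ⬝ᵥ (A *ᵥ a) := by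
    rw [dotProduct_mulVec, ← mulVec_transpose, ← conjTranspose_eq_transpose_of_trivial,
      hA.isHermitian.eq, dotProduct_comm]
  have hnonneg : 0 ≤ (a - b) ⬝ᵥ (A *ᵥ (a - b)) := by
    simpa using hA.posSemidef.dotProduct_mulVec_nonneg (a - b)
  simp only [mulVec_sub, sub_mulVec, dotProduct_sub, sub_dotProduct, hsymm, hAa, hBb] at hnonneg ⊢
  rw [dotProduct_comm Y a, dotProduct_comm Y b]
  linarith

theorem posDef_one_add_smul_sum {K : ι → Matrix n n ℝ} (hK : ∀ j, (K j).PosSemidef) {γ : ℝ}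
    (hγ : 0 ≤ γ) {s : ι → ℝ} (hs : 0 ≤ s) : (1 + γ • ∑ j, s j • K j).PosDef :=
  PosDef.one.add_posSemidef <| (posSemidef_sum _ fun j _ => (hK j).smul (hs j)).smul hγ

theorem dotProduct_one_add_smul_sum_mulVec [Fintype n] (K : ι → Matrix n n ℝ) (γ : ℝ) (s : ι → ℝ)
    (b : n → ℝ) :
    b ⬝ᵥ ((1 + γ • ∑ j, s j • K j) *ᵥ b) = b ⬝ᵥ b + γ * ∑ j, s j * (b ⬝ᵥ (K j *ᵥ b)) := by
  simp only [add_mulVec, one_mulVec, smul_mulVec, sum_mulVec, dotProduct_add, dotProduct_smul,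
    dotProduct_sum, smul_eq_mul]

end Matrix

theorem stmt15 (n p : ℕ) (K : Fin p → Matrix (Fin n) (Fin n) ℝ)
    (hK : ∀ j, (K j).PosSemidef) (Y : Fin n → ℝ) (γ : ℝ) (hγ : 0 < γ)
    (s sbar : Fin p → ℝ) (hs : s ∈ Set.Icc (0 : Fin p → ℝ) 1)
    (hsbar : sbar ∈ Set.Icc (0 : Fin p → ℝ) 1) :
    letI c : (Fin p → ℝ) → ℝ := fun s' =>
      (1 / 2) * (Y ⬝ᵥ (((1 : Matrix (Fin n) (Fin n) ℝ) + γ • ∑ j, s' j • K j)⁻¹ *ᵥ Y))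
    letI αbar : Fin n → ℝ :=
      ((1 : Matrix (Fin n) (Fin n) ℝ) + γ • ∑ j, sbar j • K j)⁻¹ *ᵥ Y
    c s ≥ c sbar + ∑ j, (-(γ / 2) * (αbar ⬝ᵥ (K j *ᵥ αbar))) * (s j - sbar j) := by
  beta_reduce
  set αbar := (1 + γ • ∑ j, sbar j • K j)⁻¹ *ᵥ Y
  have hA := posDef_one_add_smul_sum hK hγ.le hs.1
  have hB := posDef_one_add_smul_sum hK hγ.le hsbar.1
  have key := hA.dotProduct_inv_mulVec_add_le hB.isUnit Y
  rw [sub_mulVec, dotProduct_sub, dotProduct_one_add_smul_sum_mulVec,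
    dotProduct_one_add_smul_sum_mulVec] at key
  have hgrad : ∑ j, (-(γ / 2) * (αbar ⬝ᵥ (K j *ᵥ αbar))) * (s j - sbar j) =
      γ / 2 * (∑ j, sbar j * (αbar ⬝ᵥ (K j *ᵥ αbar)) - ∑ j, s j * (αbar ⬝ᵥ (K j *ᵥ αbar))) := by
    rw [← Finset.sum_sub_distrib, Finset.mul_sum]
    exact Finset.sum_congr rfl fun j _ => by ring
  linarith
end
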